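/- Every finite simple graph belonging to the class SC is vertex decomposable. -/

import Mathlib

open SimpleGraph

variable {V : Type*} {W : Type*}

/-- The open neighborhood `N(x)` of a vertex, as a set. -/
def nbhd (G : SimpleGraph V) (x : V) : Set V := {u | G.Adj x u}

/-- The closed neighborhood `N[x]` of a vertex. -/
def closedNbhd (G : SimpleGraph V) (x : V) : Set V := insert x {u | G.Adj x u}

/-- The degree of a vertex. -/
noncomputable def deg (G : SimpleGraph V) (x : V) : ℕ := (nbhd G x).ncard

/-- `S` is an independent set of vertices of `G`. -/
def IsIndep (G : SimpleGraph V) (S : Set V) : Prop :=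
  ∀ u ∈ S, ∀ w ∈ S, ¬ G.Adj u w

/-- `S` is an independent set contained in `A`, i.e. an independent set of the
induced subgraph of `G` on `A`. -/
def IsIndepOn (G : SimpleGraph V) (A S : Set V) : Prop :=
  S ⊆ A ∧ IsIndep G S

/-- `S` is a maximal independent set of the induced subgraph of `G` on `A`. -/
def IsMaxIndepOn (G : SimpleGraph V) (A S : Set V) : Prop :=
  IsIndepOn G A S ∧ ∀ T : Set V, IsIndepOn G A T → S ⊆ T → S = T

/-- A graph is well-covered if all its maximal independent sets have the same
cardinality. -/
def WellCovered (G : SimpleGraph V) : Prop :=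
  ∀ S T : Set V, IsMaxIndepOn G Set.univ S → IsMaxIndepOn G Set.univ T →
    S.ncard = T.ncard

/-- The independence number `α(G)` of a graph. -/
noncomputable def indepNum (G : SimpleGraph V) : ℕ :=
  sSup {n : ℕ | ∃ S : Set V, IsIndep G S ∧ S.ncard = n}

/-- `VDOn G A` means: the induced subgraph of `G` on `A` is vertex decomposable,
via the recursive graph-theoretic characterization: it has no edges, or there is
a vertex `v ∈ A` such that both `G∖v` and `G∖N[v]` (within `A`) are vertex
decomposable and no independent set of `G∖N[v]` is a maximal independent set
of `G∖v`. -/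
inductive VDOn (G : SimpleGraph V) : Set V → Prop
  | no_edges (A : Set V) (h : ∀ u ∈ A, ∀ w ∈ A, ¬ G.Adj u w) : VDOn G A
  | step (A : Set V) (v : V) (hv : v ∈ A)
      (hdel : VDOn G (A \ {v}))
      (hlk : VDOn G (A \ closedNbhd G v))
      (hshed : ∀ S : Set V, IsIndepOn G (A \ closedNbhd G v) S →
        ¬ IsMaxIndepOn G (A \ {v}) S) : VDOn G A

/-- A graph is vertex decomposable. -/
def VertexDecomposable (G : SimpleGraph V) : Prop := VDOn G Set.univ

/-- `c` lists the vertices of an `n`-cycle of `G` in cyclic order. -/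
def IsCycleMap {n : ℕ} (G : SimpleGraph V) (c : ZMod n → V) : Prop :=
  Function.Injective c ∧ ∀ i : ZMod n, G.Adj (c i) (c (i + 1))

/-- A vertex is simplicial if its closed neighborhood induces a complete graph. -/
def IsSimplicial (G : SimpleGraph V) (x : V) : Prop :=
  ∀ u w : V, G.Adj x u → G.Adj x w → u ≠ w → G.Adj u w

/-- A basic 5-cycle: a 5-cycle containing no two adjacent vertices that both
have degree at least 3 in `G`. -/
def IsBasic5Cycle (G : SimpleGraph V) (c : ZMod 5 → V) : Prop :=
  IsCycleMap G c ∧ ∀ i : ZMod 5, ¬(3 ≤ deg G (c i) ∧ 3 ≤ deg G (c (i + 1)))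

/-- A basic 3-cycle: a 3-cycle containing at least one vertex of degree 2. -/
def IsBasic3Cycle (G : SimpleGraph V) (c : ZMod 3 → V) : Prop :=
  IsCycleMap G c ∧ ∃ i : ZMod 3, deg G (c i) = 2

/-- `x` belongs to a simplex of `G`, i.e. to the closed neighborhood of a
simplicial vertex. -/
def InSimplex (G : SimpleGraph V) (x : V) : Prop :=
  ∃ v : V, IsSimplicial G v ∧ x ∈ closedNbhd G v

/-- `x` lies on a basic 5-cycle of `G`. -/
def OnBasic5Cycle (G : SimpleGraph V) (x : V) : Prop :=
  ∃ c : ZMod 5 → V, IsBasic5Cycle G c ∧ x ∈ Set.range c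

/-- A basic 4-cycle, labelled so that `c 0` and `c 1` are two adjacent vertices
of degree two, and the remaining two vertices `c 2`, `c 3` each belong to a
simplex or to a basic 5-cycle of `G`.  The set `B(Q)` of such a labelled basic
4-cycle is `{c 0, c 1}`. -/
def IsBasic4Cycle (G : SimpleGraph V) (c : ZMod 4 → V) : Prop :=
  IsCycleMap G c ∧ deg G (c 0) = 2 ∧ deg G (c 1) = 2 ∧
    (InSimplex G (c 2) ∨ OnBasic5Cycle G (c 2)) ∧
    (InSimplex G (c 3) ∨ OnBasic5Cycle G (c 3))

/-- The class `SQC`: the vertex set is partitioned by the closed neighborhoods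
of `m` simplicial vertices, the vertex sets of `s` basic 5-cycles and the sets
`B(Q)` of `t` basic 4-cycles. -/
def InSQC (G : SimpleGraph V) : Prop :=
  ∃ (m s t : ℕ) (x : Fin m → V) (c : Fin s → ZMod 5 → V) (q : Fin t → ZMod 4 → V),
    (∀ i, IsSimplicial G (x i)) ∧
    (∀ j, IsBasic5Cycle G (c j)) ∧
    (∀ k, IsBasic4Cycle G (q k)) ∧
    (∀ v : V, ∃! p : Fin m ⊕ Fin s ⊕ Fin t,
      match p with
      | Sum.inl i => v ∈ closedNbhd G (x i)
      | Sum.inr (Sum.inl j) => v ∈ Set.range (c j)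
      | Sum.inr (Sum.inr k) => v = q k 0 ∨ v = q k 1)

/-- The class `SC`: the vertex set is partitioned by the closed neighborhoods
of `m` simplicial vertices and the vertex sets of `s` basic 5-cycles. -/
def InSC (G : SimpleGraph V) : Prop :=
  ∃ (m s : ℕ) (x : Fin m → V) (c : Fin s → ZMod 5 → V),
    (∀ i, IsSimplicial G (x i)) ∧
    (∀ j, IsBasic5Cycle G (c j)) ∧
    (∀ v : V, ∃! p : Fin m ⊕ Fin s,
      match p with
      | Sum.inl i => v ∈ closedNbhd G (x i)
      | Sum.inr j => v ∈ Set.range (c j))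

/-- `{u, w}` is a pendant edge of `G`: an edge incident with a vertex of
degree 1. -/
def PendantEdge (G : SimpleGraph V) (u w : V) : Prop :=
  G.Adj u w ∧ (deg G u = 1 ∨ deg G w = 1)

/-- `P(G)`: vertices incident with pendant edges. -/
def pendantVerts (G : SimpleGraph V) : Set V := {v | ∃ u, PendantEdge G v u}

/-- `C(G)`: vertices lying on basic 5-cycles. -/
def basic5Verts (G : SimpleGraph V) : Set V := {v | OnBasic5Cycle G v}

/-- The class `PC`: `V(G) = P(G) ∪ C(G)` with `P(G) ∩ C(G) = ∅`, the basic
5-cycles partition `C(G)` (i.e. are pairwise vertex-disjoint), and the pendant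
edges form a perfect matching of `P(G)`. -/
def InPC (G : SimpleGraph V) : Prop :=
  pendantVerts G ∪ basic5Verts G = Set.univ ∧
  pendantVerts G ∩ basic5Verts G = ∅ ∧
  (∀ c c' : ZMod 5 → V, IsBasic5Cycle G c → IsBasic5Cycle G c' →
    Set.range c = Set.range c' ∨ Disjoint (Set.range c) (Set.range c')) ∧
  (∀ v ∈ pendantVerts G, ∃! u : V, PendantEdge G v u)

/-- The induced subgraph of `G` on `B` has no cut vertex: removing any vertex
of `B` leaves it (pre)connected. -/
def NoCutVertexOn (G : SimpleGraph V) (B : Set V) : Prop :=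
  ∀ v ∈ B, (G.induce (B \ {v})).Preconnected

/-- `B` is (the vertex set of) a block of `G`: a maximal connected induced
subgraph without a cut vertex. -/
def IsBlockOf (G : SimpleGraph V) (B : Set V) : Prop :=
  B.Nonempty ∧ (G.induce B).Connected ∧ NoCutVertexOn G B ∧
  ∀ B' : Set V, B ⊆ B' → (G.induce B').Connected → NoCutVertexOn G B' → B' = B

/-- The induced subgraph of `G` on `B` is complete. -/
def IsCompleteOn (G : SimpleGraph V) (B : Set V) : Prop :=
  ∀ u ∈ B, ∀ w ∈ B, u ≠ w → G.Adj u w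

/-- The induced subgraph of `G` on `B` is a cycle. -/
def IsCycleOn (G : SimpleGraph V) (B : Set V) : Prop :=
  ∃ n : ℕ, 3 ≤ n ∧ ∃ c : ZMod n → V, Function.Injective c ∧ Set.range c = B ∧
    ∀ i j : ZMod n, G.Adj (c i) (c j) ↔ (j = i + 1 ∨ i = j + 1)

/-- A block-cactus graph: every block is complete or a cycle. -/
def IsBlockCactus (G : SimpleGraph V) : Prop :=
  ∀ B : Set V, IsBlockOf G B → IsCompleteOn G B ∨ IsCycleOn G B

/-- A cactus graph: connected, and any two (distinct) cycles have at most one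
vertex in common. -/
def IsCactus (G : SimpleGraph V) : Prop :=
  G.Connected ∧
  ∀ (n m : ℕ), 3 ≤ n → 3 ≤ m → ∀ (c : ZMod n → V) (c' : ZMod m → V),
    IsCycleMap G c → IsCycleMap G c' →
    Set.range c = Set.range c' ∨ (Set.range c ∩ Set.range c').Subsingleton

/-- `S` is a pendant edge of `G` incident with `v`. -/
def IncidentPendant (G : SimpleGraph V) (v : V) (S : Set V) : Prop :=
  ∃ u, PendantEdge G v u ∧ S = {v, u}

/-- `S` is (the vertex set of) a basic 3-cycle of `G` through `v`. -/
def IncidentBasic3 (G : SimpleGraph V) (v : V) (S : Set V) : Prop :=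
  ∃ c : ZMod 3 → V, IsBasic3Cycle G c ∧ Set.range c = S ∧ v ∈ S

/-- `S` is (the vertex set of) a basic 4-cycle of `G` through `v`. -/
def IncidentBasic4 (G : SimpleGraph V) (v : V) (S : Set V) : Prop :=
  ∃ c : ZMod 4 → V, IsBasic4Cycle G c ∧ Set.range c = S ∧ v ∈ S

/-- `S` is (the vertex set of) a basic 5-cycle of `G` through `v`. -/
def IncidentBasic5 (G : SimpleGraph V) (v : V) (S : Set V) : Prop :=
  ∃ c : ZMod 5 → V, IsBasic5Cycle G c ∧ Set.range c = S ∧ v ∈ S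

/-- `H` is a minor of `G`, witnessed by pairwise disjoint connected branch
sets. -/
def IsMinorOf (H : SimpleGraph W) (G : SimpleGraph V) : Prop :=
  ∃ f : W → Set V,
    (∀ w, (G.induce (f w)).Connected) ∧
    (∀ w w', w ≠ w' → Disjoint (f w) (f w')) ∧
    (∀ w w', H.Adj w w' → ∃ a ∈ f w, ∃ b ∈ f w', G.Adj a b)

/-- Planarity, via Wagner's characterization: a graph is planar iff it has
neither `K₅` nor `K₃,₃` as a minor. -/
def IsPlanar (G : SimpleGraph V) : Prop :=
  ¬ IsMinorOf (⊤ : SimpleGraph (Fin 5)) G ∧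
  ¬ IsMinorOf (completeBipartiteGraph (Fin 3) (Fin 3)) G

/-- The class `W₂`: a well-covered graph such that deleting any vertex leaves a
well-covered graph with the same independence number. -/
def InW2 (G : SimpleGraph V) : Prop :=
  WellCovered G ∧ ∀ x : V,
    WellCovered (G.induce ({x}ᶜ : Set V)) ∧
    _root_.indepNum (G.induce ({x}ᶜ : Set V)) = _root_.indepNum G

/-- The edge relation of the graph `G_n`, on vertex labels `1, …, 3n-1`
(the vertex `x_i` has label `i`). -/
def gnRel (n : ℕ) (a b : ℕ) : Prop :=
  (a = 1 ∧ b = 2) ∨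
  (∃ k : ℕ, 1 ≤ k ∧ k ≤ n - 1 ∧
    ((a = 3 * k - 1 ∧ b = 3 * k) ∨ (a = 3 * k ∧ b = 3 * k + 1) ∨
     (a = 3 * k + 1 ∧ b = 3 * k + 2) ∨ (a = 3 * k + 2 ∧ b = 3 * k - 2))) ∨
  (∃ l : ℕ, 2 ≤ l ∧ l ≤ n - 1 ∧ a = 3 * l - 3 ∧ b = 3 * l)

/-- The graph `G_n`, with vertex set `{x_1, …, x_{3n-1}}`; the vertex `x_i` is
represented by the element of `Fin (3*n-1)` with value `i - 1`. -/
def Gn (n : ℕ) : SimpleGraph (Fin (3 * n - 1)) :=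
  SimpleGraph.fromRel (fun a b => gnRel n (a.1 + 1) (b.1 + 1))

/-- The graph `H_n = G_n ∖ x_{3n-1}`, with vertex set `{x_1, …, x_{3n-2}}`;
the vertex `x_i` is represented by the element of `Fin (3*n-2)` with value
`i - 1`. -/
def Hn (n : ℕ) : SimpleGraph (Fin (3 * n - 2)) :=
  SimpleGraph.fromRel (fun a b => gnRel n (a.1 + 1) (b.1 + 1))

/-!
Induct on a relative form of the class `SC` on a vertex set `A`: pairwise disjoint basic 5-cycles
together with closed neighbourhoods of vertices simplicial in `A`. While a cycle is left, take a
cycle vertex `c i` whose two cycle neighbours have degree two; one of these neighbours can always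
be added to an independent set of `A ∖ N[c i]`, so `c i` is a shedding vertex. Otherwise a
neighbour `v` of a simplicial vertex `x` is a shedding vertex, as `N[x] ⊆ N[v]`. After deleting
`v` or `N[v]`, each damaged 5-cycle falls apart into paths whose vertices lie next to a degree-two
vertex that lost a neighbour; such a vertex is simplicial, so the structure persists.
-/

section SCVertexDecomposable

variable {G : SimpleGraph V}

lemma self_mem_closedNbhd (v : V) : v ∈ closedNbhd G v := Or.inl rfl

lemma mem_closedNbhd_of_adj {v u : V} (h : G.Adj v u) : u ∈ closedNbhd G v := Or.inr h

lemma two_le_deg [Finite V] {w a b : V} (ha : G.Adj w a) (hb : G.Adj w b) (hab : a ≠ b) :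
    2 ≤ deg G w := by
  rw [← Set.ncard_pair hab]
  exact Set.ncard_le_ncard (Set.insert_subset ha (Set.singleton_subset_iff.2 hb))

lemma three_le_deg [Finite V] {w a b d : V} (ha : G.Adj w a) (hb : G.Adj w b) (hd : G.Adj w d)
    (hab : a ≠ b) (had : a ≠ d) (hbd : b ≠ d) : 3 ≤ deg G w := by
  rw [← Set.ncard_eq_three.2 ⟨a, b, d, hab, had, hbd, rfl⟩]
  exact Set.ncard_le_ncard (by rintro x (rfl | rfl | rfl) <;> assumption)

lemma nbhd_eq_pair [Finite V] {w a b : V} (hdeg : deg G w = 2) (ha : G.Adj w a)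
    (hb : G.Adj w b) (hab : a ≠ b) : nbhd G w = {a, b} :=
  (Set.eq_of_subset_of_ncard_le (Set.insert_subset ha (Set.singleton_subset_iff.2 hb))
    (by rw [Set.ncard_pair hab]; exact hdeg.le)).symm

lemma IsIndep.insert {S : Set V} {a : V} (hS : IsIndep G S) (h : ∀ s ∈ S, ¬ G.Adj a s) :
    IsIndep G (insert a S) := by
  rintro u (rfl | hu) w (rfl | hw)
  · exact G.irrefl
  · exact h w hw
  · exact fun hadj => h u hu hadj.symm
  · exact hS u hu w hw

lemma IsMaxIndepOn.mem_of_forall_not_adj {B S : Set V} {a : V} (hS : IsMaxIndepOn G B S)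
    (ha : a ∈ B) (h : ∀ s ∈ S, ¬ G.Adj a s) : a ∈ S :=
  (hS.2 _ ⟨Set.insert_subset ha hS.1.1, hS.1.2.insert h⟩ (Set.subset_insert a S)) ▸
    Set.mem_insert a S

def IsShedding (G : SimpleGraph V) (A : Set V) (v : V) : Prop :=
  ∀ S : Set V, IsIndepOn G (A \ closedNbhd G v) S → ¬ IsMaxIndepOn G (A \ {v}) S

lemma vdOn_of_invariant [Finite V] (P : Set V → Prop)
    (hP : ∀ A, P A → (∀ u ∈ A, ∀ w ∈ A, ¬ G.Adj u w) ∨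
      ∃ v ∈ A, P (A \ {v}) ∧ P (A \ closedNbhd G v) ∧ IsShedding G A v)
    (A : Set V) (hA : P A) : VDOn G A := by
  induction hn : A.ncard using Nat.strong_induction_on generalizing A with
  | _ n ih =>
  rcases hP A hA with hedgeless | ⟨v, hv, hdel, hlk, hshed⟩
  · exact .no_edges A hedgeless
  · have hlt : (A \ {v}).ncard < n := hn ▸ Set.ncard_sdiff_singleton_lt_of_mem hv
    have hle : (A \ closedNbhd G v).ncard ≤ (A \ {v}).ncard :=
      Set.ncard_le_ncard (Set.sdiff_subset_sdiff_right
        (Set.singleton_subset_iff.2 (self_mem_closedNbhd v)))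
    exact .step A v hv (ih _ hlt _ hdel rfl) (ih _ (hle.trans_lt hlt) _ hlk rfl) hshed

lemma isShedding_of_closedNbhd_subset {A : Set V} {x v : V} (hxA : x ∈ A) (hxv : x ≠ v)
    (hsub : closedNbhd G x ∩ A ⊆ closedNbhd G v) : IsShedding G A v := by
  intro S hS hmax
  have hxS := hmax.mem_of_forall_not_adj ⟨hxA, hxv⟩ fun s hs hxs =>
    (hS.1 hs).2 (hsub ⟨mem_closedNbhd_of_adj hxs, (hS.1 hs).1⟩)
  exact (hS.1 hxS).2 (hsub ⟨self_mem_closedNbhd x, hxA⟩)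

/-- If `a'` is in `S` then `b'` is not, and `b` can be added to `S`; otherwise `a` can. -/
lemma isShedding_of_nbhd_subset_pair {A : Set V} {v a a' b b' : V} (ha : G.Adj v a)
    (hb : G.Adj v b) (haA : a ∈ A) (hbA : b ∈ A) (hna : nbhd G a ⊆ {v, a'})
    (hnb : nbhd G b ⊆ {v, b'}) (hab' : G.Adj a' b') : IsShedding G A v := by
  intro S hS hmax
  have hvS : v ∉ S := fun h => (hS.1 h).2 (self_mem_closedNbhd v)
  have key : ∀ y y', G.Adj v y → y ∈ A → nbhd G y ⊆ {v, y'} → y' ∉ S → False := by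
    intro y y' hy hyA hny hy'S
    have hyS := hmax.mem_of_forall_not_adj ⟨hyA, hy.ne'⟩ fun s hs hys => by
      rcases hny hys with rfl | rfl
      · exact hvS hs
      · exact hy'S hs
    exact (hS.1 hyS).2 (mem_closedNbhd_of_adj hy)
  by_cases ha'S : a' ∈ S
  · exact key b b' hb hbA hnb fun hb'S => hS.2 a' ha'S b' hb'S hab'
  · exact key a a' ha haA hna ha'S

def IsSimplicialOn (G : SimpleGraph V) (A : Set V) (x : V) : Prop :=
  ∀ u ∈ A, ∀ w ∈ A, G.Adj x u → G.Adj x w → u ≠ w → G.Adj u w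

lemma IsSimplicialOn.mono {A B : Set V} {x : V} (hx : IsSimplicialOn G A x) (h : B ⊆ A) :
    IsSimplicialOn G B x :=
  fun u hu w hw => hx u (h hu) w (h hw)

lemma isSimplicialOn_of_subsingleton {A : Set V} {x : V} (h : (nbhd G x ∩ A).Subsingleton) :
    IsSimplicialOn G A x :=
  fun _ hu _ hw hxu hxw huw => absurd (h ⟨hxu, hu⟩ ⟨hxw, hw⟩) huw

lemma IsSimplicialOn.closedNbhd_inter_subset {A : Set V} {x v : V}
    (hx : IsSimplicialOn G A x) (hvA : v ∈ A) (hxv : x ∈ closedNbhd G v) :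
    closedNbhd G x ∩ A ⊆ closedNbhd G v := by
  rintro u ⟨rfl | hxu, huA⟩
  · exact hxv
  rcases hxv with rfl | hvx
  · exact mem_closedNbhd_of_adj hxu
  by_cases huv : u = v
  · rw [huv]
    exact self_mem_closedNbhd v
  · exact mem_closedNbhd_of_adj (hx u huA v hvA hxu hvx.symm huv).symm

/-- The unmarked arcs of a marked 5-cycle have at most four positions. -/
lemma ZMod.five_exists_near_boundary : ∀ p : ZMod 5 → Bool, (∃ k, p k = true) →
    ∀ k, p k = false → ∃ j, p j = false ∧ (p (j + 1) = true ∨ p (j - 1) = true) ∧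
      (k = j ∨ k = j + 1 ∨ k = j - 1) := by
  decide

variable {A D : Set V} {CS : Set (ZMod 5 → V)} {c : ZMod 5 → V} {i j k : ZMod 5}

namespace IsCycleMap

lemma adj_pred (hc : IsCycleMap G c) (j : ZMod 5) : G.Adj (c j) (c (j - 1)) := by
  simpa using (hc.2 (j - 1)).symm

lemma two_le_deg [Finite V] (hc : IsCycleMap G c) (j : ZMod 5) : 2 ≤ deg G (c j) :=
  _root_.two_le_deg (hc.2 j) (hc.adj_pred j) (hc.1.ne (by grind))

lemma three_le_deg_of_adj [Finite V] (hc : IsCycleMap G c) {u : V} (h : G.Adj (c j) u)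
    (h1 : u ≠ c (j + 1)) (h2 : u ≠ c (j - 1)) : 3 ≤ deg G (c j) :=
  three_le_deg (hc.2 j) (hc.adj_pred j) h (hc.1.ne (by grind)) h1.symm h2.symm

lemma nbhd_eq [Finite V] (hc : IsCycleMap G c) (h : deg G (c j) = 2) :
    nbhd G (c j) = {c (j + 1), c (j - 1)} :=
  nbhd_eq_pair h (hc.2 j) (hc.adj_pred j) (hc.1.ne (by grind))

lemma closedNbhd_subset_range [Finite V] (hc : IsCycleMap G c) (h : deg G (c j) = 2) :
    closedNbhd G (c j) ⊆ Set.range c := by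
  rintro u (rfl | hu)
  · exact ⟨j, rfl⟩
  · have hu' : u ∈ nbhd G (c j) := hu
    rw [hc.nbhd_eq h] at hu'
    rcases hu' with rfl | rfl <;> exact ⟨_, rfl⟩

end IsCycleMap

namespace IsBasic5Cycle

lemma deg_succ_eq_two [Finite V] (hc : IsBasic5Cycle G c) (h : 3 ≤ deg G (c j)) :
    deg G (c (j + 1)) = 2 := by
  have := hc.1.two_le_deg (j + 1)
  have := hc.2 j
  omega

lemma deg_pred_eq_two [Finite V] (hc : IsBasic5Cycle G c) (h : 3 ≤ deg G (c j)) :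
    deg G (c (j - 1)) = 2 := by
  have := hc.1.two_le_deg (j - 1)
  have := hc.2 (j - 1)
  rw [sub_add_cancel] at this
  omega

lemma exists_deg_eq_two [Finite V] (hc : IsBasic5Cycle G c) :
    ∃ i, deg G (c (i + 1)) = 2 ∧ deg G (c (i - 1)) = 2 := by
  by_cases h : ∃ k, 3 ≤ deg G (c k)
  · obtain ⟨k, hk⟩ := h
    exact ⟨k, hc.deg_succ_eq_two hk, hc.deg_pred_eq_two hk⟩
  · simp only [not_exists, not_le] at h
    have h2 : ∀ k, deg G (c k) = 2 := fun k => by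
      have := hc.1.two_le_deg k
      have := h k
      omega
    exact ⟨0, h2 _, h2 _⟩

end IsBasic5Cycle

def IsFragmentCentre (G : SimpleGraph V) (D : Set V) (c : ZMod 5 → V) (j : ZMod 5) : Prop :=
  c j ∉ D ∧ deg G (c j) = 2 ∧ (c (j + 1) ∈ D ∨ c (j - 1) ∈ D)

lemma IsCycleMap.isSimplicialOn_diff [Finite V] (hc : IsCycleMap G c)
    (hj : IsFragmentCentre G D c j) (A : Set V) : IsSimplicialOn G (A \ D) (c j) := by
  apply isSimplicialOn_of_subsingleton
  rw [hc.nbhd_eq hj.2.1]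
  rintro u ⟨hu, -, huD⟩ w ⟨hw, -, hwD⟩
  rcases hu with rfl | rfl <;> rcases hw with rfl | rfl <;> first
    | rfl
    | rcases hj.2.2 with h | h <;> contradiction

lemma IsCycleMap.exists_isFragmentCentre (hc : IsCycleMap G c) (hD : ∃ k, c k ∈ D)
    (hend : ∀ j, c j ∉ D → (c (j + 1) ∈ D ∨ c (j - 1) ∈ D) → deg G (c j) = 2)
    (hk : c k ∉ D) : ∃ j, IsFragmentCentre G D c j ∧ c k ∈ closedNbhd G (c j) := by
  classical
  obtain ⟨j, hj, hbd, hkj⟩ := ZMod.five_exists_near_boundary (fun k => decide (c k ∈ D))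
    (by simpa using hD) k (by simpa using hk)
  simp only [decide_eq_true_eq, decide_eq_false_iff_not] at hj hbd
  refine ⟨j, ⟨hj, hend j hj hbd, hbd⟩, ?_⟩
  rcases hkj with rfl | rfl | rfl
  · exact self_mem_closedNbhd _
  · exact mem_closedNbhd_of_adj (hc.2 _)
  · exact mem_closedNbhd_of_adj (hc.adj_pred _)

namespace IsBasic5Cycle

lemma three_le_deg_of_mem_closedNbhd [Finite V] (hc : IsBasic5Cycle G c) {v : V}
    (hv : v ∉ Set.range c) (h : c j ∈ closedNbhd G v) : 3 ≤ deg G (c j) := by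
  rcases h with h | h
  · exact absurd ⟨j, h⟩ hv
  · exact hc.1.three_le_deg_of_adj h.symm (fun h' => hv ⟨_, h'.symm⟩)
      (fun h' => hv ⟨_, h'.symm⟩)

lemma exists_isFragmentCentre_of_notMem_range [Finite V] (hc : IsBasic5Cycle G c) {v : V}
    (hv : v ∉ Set.range c) (hD : ∃ k, c k ∈ closedNbhd G v) (hk : c k ∉ closedNbhd G v) :
    ∃ j, IsFragmentCentre G (closedNbhd G v) c j ∧ c k ∈ closedNbhd G (c j) := by
  refine hc.1.exists_isFragmentCentre hD ?_ hk
  rintro j - (h | h)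
  · simpa using hc.deg_pred_eq_two (hc.three_le_deg_of_mem_closedNbhd hv h)
  · simpa using hc.deg_succ_eq_two (hc.three_le_deg_of_mem_closedNbhd hv h)

/-- Deleting `N[c i]` leaves at most `c (i + 2)` and `c (i - 2)`, and whichever of the two has
degree two is a fragment centre covering both. -/
lemma exists_isFragmentCentre_self [Finite V] (hc : IsBasic5Cycle G c)
    (hk : c k ∉ closedNbhd G (c i)) :
    ∃ j, IsFragmentCentre G (closedNbhd G (c i)) c j ∧ c k ∈ closedNbhd G (c j) := by
  have hout : ∀ m, (m = i + 2 ∨ m = i - 2) → deg G (c m) = 2 → c m ∉ closedNbhd G (c i) := by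
    rintro m hm hdeg (hmi | hadj)
    · exact (by grind : m ≠ i) (hc.1.1 hmi)
    · have := hc.1.three_le_deg_of_adj hadj.symm (hc.1.1.ne (by grind)) (hc.1.1.ne (by grind))
      omega
  have hk' : k = i + 2 ∨ k = i - 2 := by
    rcases (by decide : ∀ i k : ZMod 5, k = i ∨ k = i + 1 ∨ k = i - 1 ∨ k = i + 2 ∨ k = i - 2)
      i k with rfl | rfl | rfl | h | h
    · exact absurd (self_mem_closedNbhd _) hk
    · exact absurd (mem_closedNbhd_of_adj (hc.1.2 i)) hk
    · exact absurd (mem_closedNbhd_of_adj (hc.1.adj_pred i)) hk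
    all_goals tauto
  by_cases h2 : deg G (c (i + 2)) = 2
  · refine ⟨i + 2, ⟨hout _ (Or.inl rfl) h2, h2, Or.inr ?_⟩, ?_⟩
    · rw [show i + 2 - 1 = i + 1 by ring]
      exact mem_closedNbhd_of_adj (hc.1.2 i)
    · rcases hk' with rfl | rfl
      · exact self_mem_closedNbhd _
      · rw [show i - 2 = i + 2 + 1 by grind]
        exact mem_closedNbhd_of_adj (hc.1.2 _)
  · have h3 : deg G (c (i - 2)) = 2 := by
      have := hc.deg_succ_eq_two (j := i + 2) (by have := hc.1.two_le_deg (i + 2); omega)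
      rwa [show i + 2 + 1 = i - 2 by grind] at this
    refine ⟨i - 2, ⟨hout _ (Or.inr rfl) h3, h3, Or.inl ?_⟩, ?_⟩
    · rw [show i - 2 + 1 = i - 1 by ring]
      exact mem_closedNbhd_of_adj (hc.1.adj_pred i)
    · rcases hk' with rfl | rfl
      · rw [show i + 2 = i - 2 - 1 by grind]
        exact mem_closedNbhd_of_adj (hc.1.adj_pred _)
      · exact self_mem_closedNbhd _

end IsBasic5Cycle

lemma IsCycleMap.isShedding_of_deg_eq_two [Finite V] (hc : IsCycleMap G c) (hcA : Set.range c ⊆ A)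
    (h1 : deg G (c (i + 1)) = 2) (h4 : deg G (c (i - 1)) = 2) : IsShedding G A (c i) := by
  refine isShedding_of_nbhd_subset_pair (a' := c (i + 2)) (b' := c (i - 2)) (hc.2 i)
    (hc.adj_pred i) (hcA ⟨_, rfl⟩) (hcA ⟨_, rfl⟩) ?_ ?_ ?_
  · rw [hc.nbhd_eq h1, show i + 1 + 1 = i + 2 by ring, add_sub_cancel_right, Set.pair_comm]
  · rw [hc.nbhd_eq h4, sub_add_cancel, show i - 1 - 1 = i - 2 by ring]
  · simpa [show i + 2 + 1 = i - 2 by grind] using hc.2 (i + 2)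

def IsCentre (G : SimpleGraph V) (A : Set V) (CS : Set (ZMod 5 → V)) (x : V) : Prop :=
  x ∈ A ∧ IsSimplicialOn G A x ∧ ∀ c ∈ CS, ∀ k, c k ∉ closedNbhd G x

lemma IsCentre.mono {B : Set V} {CS' : Set (ZMod 5 → V)} {x : V} (hx : IsCentre G A CS x)
    (hxB : x ∈ B) (hB : B ⊆ A) (hCS : CS' ⊆ CS) : IsCentre G B CS' x :=
  ⟨hxB, hx.2.1.mono hB, fun c hc => hx.2.2 c (hCS hc)⟩

/-- The relative form of the class `SC` that survives both deletions of a decomposition step: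
simplices become closed neighbourhoods of vertices simplicial in `A` (possibly overlapping). -/
structure IsSCCover (G : SimpleGraph V) (A : Set V) (CS : Set (ZMod 5 → V)) : Prop where
  basic : ∀ c ∈ CS, IsBasic5Cycle G c
  range_subset : ∀ c ∈ CS, Set.range c ⊆ A
  eq_of_apply_eq : ∀ c ∈ CS, ∀ c' ∈ CS, ∀ k k', c k = c' k' → c = c'
  cover : ∀ u ∈ A, (∃ x, IsCentre G A CS x ∧ u ∈ closedNbhd G x) ∨ ∃ c ∈ CS, u ∈ Set.range c

namespace IsSCCover

lemma isCentre_of_isFragmentCentre [Finite V] (h : IsSCCover G A CS) (hc : c ∈ CS)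
    (hD : ∃ k, c k ∈ D) (hj : IsFragmentCentre G D c j) :
    IsCentre G (A \ D) {c ∈ CS | ∀ k, c k ∉ D} (c j) := by
  refine ⟨⟨h.range_subset c hc ⟨j, rfl⟩, hj.1⟩, (h.basic c hc).1.isSimplicialOn_diff hj A, ?_⟩
  rintro c' ⟨hc', hc'D⟩ k hk
  obtain ⟨m, hm⟩ := (h.basic c hc).1.closedNbhd_subset_range hj.2.1 hk
  obtain ⟨k', hk'⟩ := hD
  exact hc'D k' (h.eq_of_apply_eq c hc c' hc' m k hm ▸ hk')

lemma diff [Finite V] (h : IsSCCover G A CS) (D : Set V)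
    (hcentre : ∀ x, IsCentre G A CS x → x ∈ D → ∀ u ∈ A \ D, u ∈ closedNbhd G x →
      ∃ y ∉ D, IsCentre G A CS y ∧ u ∈ closedNbhd G y)
    (hfrag : ∀ c ∈ CS, (∃ k, c k ∈ D) → ∀ k, c k ∉ D →
      ∃ j, IsFragmentCentre G D c j ∧ c k ∈ closedNbhd G (c j)) :
    IsSCCover G (A \ D) {c ∈ CS | ∀ k, c k ∉ D} := by
  refine ⟨fun c hc => h.basic c hc.1, ?_, fun c hc c' hc' => h.eq_of_apply_eq c hc.1 c' hc'.1, ?_⟩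
  · rintro c ⟨hc, hcD⟩ _ ⟨k, rfl⟩
    exact ⟨h.range_subset c hc ⟨k, rfl⟩, hcD k⟩
  · intro u hu
    rcases h.cover u hu.1 with ⟨x, hx, hux⟩ | ⟨c, hc, k, rfl⟩
    · obtain ⟨y, hyD, hy, huy⟩ : ∃ y ∉ D, IsCentre G A CS y ∧ u ∈ closedNbhd G y := by
        by_cases hxD : x ∈ D
        · exact hcentre x hx hxD u hu hux
        · exact ⟨x, hxD, hx, hux⟩
      exact Or.inl ⟨y, hy.mono ⟨hy.1, hyD⟩ Set.sdiff_subset fun c hc => hc.1, huy⟩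
    · by_cases hD : ∃ k, c k ∈ D
      · obtain ⟨j, hj, hkj⟩ := hfrag c hc hD k hu.2
        exact Or.inl ⟨c j, h.isCentre_of_isFragmentCentre hc hD hj, hkj⟩
      · simp only [not_exists] at hD
        exact Or.inr ⟨c, ⟨hc, hD⟩, k, rfl⟩

variable {x v : V}

lemma diff_singleton_of_centre [Finite V] (h : IsSCCover G A CS) (hx : IsCentre G A CS x)
    (hxv : G.Adj x v) : IsSCCover G (A \ {v}) {c ∈ CS | ∀ k, c k ∉ ({v} : Set V)} := by
  refine h.diff {v} ?_ ?_
  · rintro y hy rfl u hu huy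
    exact ⟨x, hxv.ne, hx, hy.2.1.closedNbhd_inter_subset hx.1 (mem_closedNbhd_of_adj hxv)
      ⟨huy, hu.1⟩⟩
  · rintro c hc ⟨k, hk⟩
    exact absurd (Set.mem_singleton_iff.1 hk ▸ mem_closedNbhd_of_adj hxv) (hx.2.2 c hc k)

lemma diff_closedNbhd_of_centre [Finite V] (h : IsSCCover G A CS) (hx : IsCentre G A CS x)
    (hvA : v ∈ A) (hxv : G.Adj x v) :
    IsSCCover G (A \ closedNbhd G v) {c ∈ CS | ∀ k, c k ∉ closedNbhd G v} := by
  refine h.diff _ (fun y hy hyv u hu huy =>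
    absurd (hy.2.1.closedNbhd_inter_subset hvA hyv ⟨huy, hu.1⟩) hu.2) ?_
  intro c hc hD k hk
  refine (h.basic c hc).exists_isFragmentCentre_of_notMem_range ?_ hD hk
  rintro ⟨m, rfl⟩
  exact hx.2.2 c hc m (mem_closedNbhd_of_adj hxv)

lemma diff_singleton_of_cycle [Finite V] (h : IsSCCover G A CS) (hc : c ∈ CS)
    (h1 : deg G (c (i + 1)) = 2) (h4 : deg G (c (i - 1)) = 2) :
    IsSCCover G (A \ {c i}) {c' ∈ CS | ∀ k, c' k ∉ ({c i} : Set V)} := by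
  refine h.diff _ (fun y hy hyv => absurd (Set.mem_singleton_iff.1 hyv ▸
    self_mem_closedNbhd y) (hy.2.2 c hc i)) ?_
  rintro c' hc' ⟨m, hm⟩ k hk
  obtain rfl := h.eq_of_apply_eq c' hc' c hc m i hm
  refine (h.basic c' hc').1.exists_isFragmentCentre ⟨m, hm⟩ ?_ hk
  rintro j - (hj | hj) <;> obtain rfl := (h.basic c' hc').1.1 hj
  · simpa using h4
  · simpa using h1

lemma diff_closedNbhd_of_cycle [Finite V] (h : IsSCCover G A CS) (hc : c ∈ CS) :
    IsSCCover G (A \ closedNbhd G (c i)) {c' ∈ CS | ∀ k, c' k ∉ closedNbhd G (c i)} := by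
  refine h.diff _ (fun y hy hyv u hu huy => absurd (hy.2.1.closedNbhd_inter_subset
    (h.range_subset c hc ⟨i, rfl⟩) hyv ⟨huy, hu.1⟩) hu.2) ?_
  intro c' hc' hD k hk
  by_cases hcc : c' = c
  · subst hcc
    exact (h.basic c' hc).exists_isFragmentCentre_self hk
  · refine (h.basic c' hc').exists_isFragmentCentre_of_notMem_range ?_ hD hk
    rintro ⟨m, hm⟩
    exact hcc (h.eq_of_apply_eq c' hc' c hc m i hm)

lemma edgeless_or_exists_isShedding [Finite V] (h : IsSCCover G A CS) :
    (∀ u ∈ A, ∀ w ∈ A, ¬ G.Adj u w) ∨ ∃ v ∈ A, (∃ CS', IsSCCover G (A \ {v}) CS') ∧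
      (∃ CS', IsSCCover G (A \ closedNbhd G v) CS') ∧ IsShedding G A v := by
  by_cases hCS : ∃ c, c ∈ CS
  · obtain ⟨c, hc⟩ := hCS
    obtain ⟨i, h1, h4⟩ := (h.basic c hc).exists_deg_eq_two
    exact Or.inr ⟨c i, h.range_subset c hc ⟨i, rfl⟩, ⟨_, h.diff_singleton_of_cycle hc h1 h4⟩,
      ⟨_, h.diff_closedNbhd_of_cycle hc⟩, (h.basic c hc).1.isShedding_of_deg_eq_two (h.range_subset c hc) h1 h4⟩
  by_cases hxv : ∃ x v, IsCentre G A CS x ∧ v ∈ A ∧ G.Adj x v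
  · obtain ⟨x, v, hx, hvA, hxv⟩ := hxv
    exact Or.inr ⟨v, hvA, ⟨_, h.diff_singleton_of_centre hx hxv⟩,
      ⟨_, h.diff_closedNbhd_of_centre hx hvA hxv⟩, isShedding_of_closedNbhd_subset hx.1 hxv.ne
        (hx.2.1.closedNbhd_inter_subset hvA (mem_closedNbhd_of_adj hxv.symm))⟩
  refine Or.inl fun u hu w hw huw => ?_
  rcases h.cover u hu with ⟨x, hx, rfl | hxu⟩ | ⟨c, hc, -⟩
  · exact hxv ⟨u, w, hx, hw, huw⟩
  · exact hxv ⟨x, u, hx, hu, hxu⟩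
  · exact hCS ⟨c, hc⟩

end IsSCCover

lemma InSC.exists_isSCCover (h : InSC G) : ∃ CS, IsSCCover G Set.univ CS := by
  obtain ⟨m, s, x, c, hx, hc, huniq⟩ := h
  refine ⟨Set.range c, ⟨?_, fun _ _ _ _ => Set.mem_univ _, ?_, ?_⟩⟩
  · rintro _ ⟨j, rfl⟩
    exact hc j
  · rintro _ ⟨j, rfl⟩ _ ⟨j', rfl⟩ k k' hkk'
    obtain ⟨p, -, hp⟩ := huniq (c j k)
    cases (hp (.inr j) ⟨k, rfl⟩).trans (hp (.inr j') ⟨k', hkk'.symm⟩).symm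
    rfl
  · intro u _
    obtain ⟨p, hp, -⟩ := huniq u
    rcases p with i | j
    · refine Or.inl ⟨x i, ⟨Set.mem_univ _, fun a _ b _ => hx i a b, ?_⟩, hp⟩
      rintro _ ⟨j, rfl⟩ k hk
      obtain ⟨p, -, hp'⟩ := huniq (c j k)
      cases (hp' (.inl i) hk).trans (hp' (.inr j) ⟨k, rfl⟩).symm
    · exact Or.inr ⟨c j, ⟨j, rfl⟩, hp⟩

end SCVertexDecomposable

/-- Every finite simple graph belonging to the class `SC` is
vertex decomposable. -/
theorem stmt1 {V : Type*} [Fintype V] (G : SimpleGraph V) (h : InSC G) :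
    VertexDecomposable G := by
  obtain ⟨CS, hCS⟩ := h.exists_isSCCover
  exact vdOn_of_invariant (fun A => ∃ CS, IsSCCover G A CS)
    (fun _ ⟨_, hA⟩ => hA.edgeless_or_exists_isShedding) Set.univ ⟨CS, hCS⟩
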